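/- arXiv:2601.00750 — 2 statements merged into one kernel-verified Lean document; each statement's English description precedes it below -/
import Mathlib

section
/- Let $k_{\textnormal{F}} > 0$ and let $L_k = \{p \in \mathbb{Z}^2 : |p| \geq k_{\textnormal{F}}, |p-k| < k_{\textnormal{F}}\}$ be the lune associated to $k \in \mathbb{Z}^2 \setminus \{0\}$. Then there exists a constant $C > 0$ (independent of $k$ and $k_{\textnormal{F}}$) such that $|L_k| \leq C |k| (k_{\textnormal{F}} + 1)$. -/
/-!
The lune is subadditive in `k`: a point of `L_{a+b}` either lies in `L_a`, or lies outside the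
ball around `a` and then is `a` plus a point of `L_b`. Together with the symmetries `L_{-k} = -L_k`
and `L_{swap k} = swap L_k`, this gives `|L_k| ≤ (|k₁| + |k₂|) |L_{(1,0)}|`. Finally `L_{(1,0)}`
has at most one point on each horizontal line `p₂ = y`, and only the lines with `|y| < k_F` meet it.
-/

noncomputable def znorm (p : ℤ × ℤ) : ℝ := Real.sqrt ((p.1 : ℝ)^2 + (p.2 : ℝ)^2)

def lune (kF : ℝ) (k : ℤ × ℤ) : Set (ℤ × ℤ) := {p | kF ≤ znorm p ∧ znorm (p - k) < kF}

lemma abs_fst_le_znorm (p : ℤ × ℤ) : |(p.1 : ℝ)| ≤ znorm p :=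
  Real.abs_le_sqrt (le_add_of_nonneg_right (sq_nonneg _))

lemma abs_snd_le_znorm (p : ℤ × ℤ) : |(p.2 : ℝ)| ≤ znorm p :=
  Real.abs_le_sqrt (le_add_of_nonneg_left (sq_nonneg _))

lemma znorm_neg (p : ℤ × ℤ) : znorm (-p) = znorm p := by
  simp [znorm]

lemma znorm_swap (p : ℤ × ℤ) : znorm p.swap = znorm p := by
  simp [znorm, add_comm]

lemma natAbs_le_floor_of_abs_lt {x : ℤ} {r : ℝ} (h : |(x : ℝ)| < r) : x.natAbs ≤ ⌊r⌋₊ :=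
  Nat.le_floor (by rw [Nat.cast_natAbs, Int.cast_abs]; exact h.le)

lemma natAbs_le_iff_mem_Icc {x : ℤ} {m : ℕ} : x.natAbs ≤ m ↔ x ∈ Set.Icc (-(m : ℤ)) m := by
  rw [Set.mem_Icc]; omega

section Lune

variable (kF : ℝ)

lemma sq_bounds_of_mem_lune {k p : ℤ × ℤ} (hp : p ∈ lune kF k) :
    kF ^ 2 ≤ (p.1 : ℝ) ^ 2 + (p.2 : ℝ) ^ 2 ∧
      ((p - k).1 : ℝ) ^ 2 + ((p - k).2 : ℝ) ^ 2 < kF ^ 2 := by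
  have hkF : 0 < kF := (Real.sqrt_nonneg _).trans_lt hp.2
  exact ⟨(Real.le_sqrt hkF.le (by positivity)).1 hp.1, (Real.sqrt_lt' hkF).1 hp.2⟩

lemma lune_finite (k : ℤ × ℤ) : (lune kF k).Finite := by
  let m : ℤ := ⌊kF⌋₊
  refine (((Set.finite_Icc (-m) m).prod (Set.finite_Icc (-m) m)).image (· + k)).subset ?_
  rintro p ⟨-, hp⟩
  refine ⟨p - k, ⟨?_, ?_⟩, sub_add_cancel p k⟩
  · exact natAbs_le_iff_mem_Icc.1 <| natAbs_le_floor_of_abs_lt <|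
      (abs_fst_le_znorm (p - k)).trans_lt hp
  · exact natAbs_le_iff_mem_Icc.1 <| natAbs_le_floor_of_abs_lt <|
      (abs_snd_le_znorm (p - k)).trans_lt hp

@[simp]
lemma lune_zero : lune kF 0 = ∅ :=
  Set.eq_empty_of_forall_notMem fun p ⟨h₁, h₂⟩ => (h₁.trans_lt (by simpa using h₂)).false

lemma lune_neg (k : ℤ × ℤ) : lune kF (-k) = -lune kF k := by
  ext p
  have hsub : -p - k = -(p - -k) := by abel
  simp only [lune, Set.mem_neg, Set.mem_ofPred_eq, znorm_neg, hsub]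

lemma lune_swap (k : ℤ × ℤ) : lune kF k.swap = Prod.swap ⁻¹' lune kF k := by
  ext p
  have hsub : p.swap - k = (p - k.swap).swap := by ext <;> simp
  simp only [lune, Set.mem_preimage, Set.mem_ofPred_eq, hsub, znorm_swap]

lemma lune_add_subset (a b : ℤ × ℤ) : lune kF (a + b) ⊆ lune kF a ∪ (· + a) '' lune kF b := by
  rintro p ⟨hp, hpab⟩
  by_cases hpa : znorm (p - a) < kF
  · exact Or.inl ⟨hp, hpa⟩
  · exact Or.inr ⟨p - a, ⟨not_lt.1 hpa, by rwa [sub_sub]⟩, sub_add_cancel p a⟩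

lemma ncard_lune_add_le (a b : ℤ × ℤ) :
    (lune kF (a + b)).ncard ≤ (lune kF a).ncard + (lune kF b).ncard :=
  calc (lune kF (a + b)).ncard
      ≤ (lune kF a ∪ (· + a) '' lune kF b).ncard :=
        Set.ncard_le_ncard (lune_add_subset kF a b)
          ((lune_finite kF a).union ((lune_finite kF b).image _))
    _ ≤ (lune kF a).ncard + ((· + a) '' lune kF b).ncard := Set.ncard_union_le _ _
    _ = (lune kF a).ncard + (lune kF b).ncard := by
        rw [Set.ncard_image_of_injective _ (add_left_injective a)]

lemma ncard_lune_nsmul_le (a : ℤ × ℤ) (n : ℕ) :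
    (lune kF (n • a)).ncard ≤ n * (lune kF a).ncard := by
  induction n with
  | zero => simp
  | succ n ih =>
    rw [succ_nsmul, Nat.succ_mul]
    exact (ncard_lune_add_le kF _ _).trans (Nat.add_le_add_right ih _)

lemma ncard_lune_zsmul_le (a : ℤ × ℤ) (n : ℤ) :
    (lune kF (n • a)).ncard ≤ n.natAbs * (lune kF a).ncard := by
  obtain ⟨m, rfl | rfl⟩ := Int.eq_nat_or_neg n
  · simpa using ncard_lune_nsmul_le kF a m
  · rw [neg_smul, lune_neg, Set.ncard_neg, natCast_zsmul, Int.natAbs_neg, Int.natAbs_natCast]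
    exact ncard_lune_nsmul_le kF a m

lemma fst_le_of_mem_lune_unit {p q : ℤ × ℤ} (hp : p ∈ lune kF (1, 0)) (hq : q ∈ lune kF (1, 0))
    (hpq : p.2 = q.2) : q.1 ≤ p.1 := by
  by_contra! hlt
  have hstep : (p.1 : ℝ) + 1 ≤ q.1 := by exact_mod_cast hlt
  obtain ⟨hp₁, hp₂⟩ := sq_bounds_of_mem_lune kF hp
  obtain ⟨-, hq₂⟩ := sq_bounds_of_mem_lune kF hq
  simp only [Prod.fst_sub, Prod.snd_sub, sub_zero, Int.cast_sub, Int.cast_one] at hp₂ hq₂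
  rw [← hpq] at hq₂
  -- `p₁ > 1/2` follows from `p` lying outside the ball around `0` but inside the one around `(1,0)`
  nlinarith

lemma ncard_lune_unit_le : (lune kF (1, 0)).ncard ≤ 2 * ⌊kF⌋₊ + 1 := by
  have hrow : ∀ p ∈ lune kF (1, 0), p.2 ∈ Set.Icc (-(⌊kF⌋₊ : ℤ)) ⌊kF⌋₊ := fun p hp =>
    natAbs_le_iff_mem_Icc.1 <| natAbs_le_floor_of_abs_lt <| by
      simpa using (abs_snd_le_znorm (p - (1, 0))).trans_lt hp.2
  have hinj : Set.InjOn Prod.snd (lune kF (1, 0)) := fun p hp q hq hpq =>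
    Prod.ext (le_antisymm (fst_le_of_mem_lune_unit kF hq hp hpq.symm)
      (fst_le_of_mem_lune_unit kF hp hq hpq)) hpq
  calc (lune kF (1, 0)).ncard ≤ (Set.Icc (-(⌊kF⌋₊ : ℤ)) ⌊kF⌋₊).ncard :=
        Set.ncard_le_ncard_of_injOn _ hrow hinj
    _ = 2 * ⌊kF⌋₊ + 1 := by
        rw [← Finset.coe_Icc, Set.ncard_coe_finset, Int.card_Icc]; omega

lemma ncard_lune_le (k : ℤ × ℤ) :
    (lune kF k).ncard ≤ (k.1.natAbs + k.2.natAbs) * (2 * ⌊kF⌋₊ + 1) := by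
  have hk : k = k.1 • (1, 0) + k.2 • ((1, 0) : ℤ × ℤ).swap := by ext <;> simp
  have hswap : (lune kF ((1, 0) : ℤ × ℤ).swap).ncard = (lune kF (1, 0)).ncard := by
    rw [lune_swap, Set.ncard_preimage_of_injective_subset_range Prod.swap_injective
      (by simp [Prod.swap_surjective.range_eq])]
  calc (lune kF k).ncard
      ≤ k.1.natAbs * (lune kF (1, 0)).ncard + k.2.natAbs * (lune kF (1, 0)).ncard := by
        nth_rw 1 [hk]
        exact (ncard_lune_add_le kF _ _).trans <| Nat.add_le_add (ncard_lune_zsmul_le kF _ _)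
          ((ncard_lune_zsmul_le kF _ _).trans_eq (by rw [hswap]))
    _ ≤ (k.1.natAbs + k.2.natAbs) * (2 * ⌊kF⌋₊ + 1) := by
        rw [← Nat.add_mul]; exact Nat.mul_le_mul_left _ (ncard_lune_unit_le kF)

end Lune

theorem stmt0 :
    ∃ C : ℝ, 0 < C ∧ ∀ (kF : ℝ), 0 < kF → ∀ k : ℤ × ℤ, k ≠ 0 →
      (Set.ncard {p : ℤ × ℤ | kF ≤ znorm p ∧ znorm (p - k) < kF} : ℝ)
        ≤ C * znorm k * (kF + 1) := by
  refine ⟨4, by norm_num, fun kF hkF k _ => ?_⟩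
  have hcount : ((lune kF k).ncard : ℝ) ≤ (|(k.1 : ℝ)| + |(k.2 : ℝ)|) * (2 * ⌊kF⌋₊ + 1) := by
    simpa [Nat.cast_natAbs] using (Nat.cast_le (α := ℝ)).2 (ncard_lune_le kF k)
  have hfloor : (⌊kF⌋₊ : ℝ) ≤ kF := Nat.floor_le hkF.le
  have h₀ : 0 ≤ znorm k := Real.sqrt_nonneg _
  have h₁ := abs_fst_le_znorm k
  have h₂ := abs_snd_le_znorm k
  calc ((lune kF k).ncard : ℝ)
      ≤ (|(k.1 : ℝ)| + |(k.2 : ℝ)|) * (2 * ⌊kF⌋₊ + 1) := hcount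
    _ ≤ (2 * znorm k) * (2 * kF + 1) := by gcongr; linarith
    _ ≤ 4 * znorm k * (kF + 1) := by nlinarith [abs_nonneg (k.1 : ℝ)]
end

section
/- Let $k_{\textnormal{F}} > 0$ with $N$ comparable to $k_{\textnormal{F}}^2$, and let $e(p) = ||p|^2 - k_{\textnormal{F}}^2|$ satisfy $e(p) \geq 1/2$ for all $p \in \mathbb{Z}^2$ (midpoint choice of $k_{\textnormal{F}}^2$). Assume the divisor-type bound $r_2(n) \leq C_\varepsilon n^\varepsilon$. Then for every $\varepsilon > 0$ there exists $C_\varepsilon > 0$ such that $\sum_{p \in \mathbb{Z}^2,\, |p| \leq 2 k_{\textnormal{F}}} \frac{1}{e(p)} \leq C_\varepsilon k_{\textnormal{F}}^{2\varepsilon} \log(2 + k_{\textnormal{F}})$. -/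
/-!
Grouping the lattice points of the disk `|p| ≤ 2 k_F` by `n = |p|²` turns the sum into
`∑_{n ≤ 4 k_F²} r₂(n) / |n - k_F²|`, and for `n ≤ 4 k_F²` the divisor bound gives
`r₂(n) ≲ k_F^{2ε}` (`n = 0` included, as `k_F² ≥ 1/2`). Every `n` with `r₂(n) ≠ 0` is at distance
at least `1/2` from `k_F²`, so replacing `|n - k_F²|` by `max (1/2) |n - k_F²|` loses nothing;
then the `j`-th integer on either side of `k_F²` has weight at most `2 / j`, and the two harmonic
sums that result are `O(log k_F)`.
-/

open Finset

noncomputable def r₂ (n : ℕ) : ℕ := Set.ncard {p : ℤ × ℤ | p.1^2 + p.2^2 = (n : ℤ)}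

def latticeNormSq (p : ℤ × ℤ) : ℕ := p.1.natAbs ^ 2 + p.2.natAbs ^ 2

lemma intCast_latticeNormSq (p : ℤ × ℤ) : (latticeNormSq p : ℤ) = p.1 ^ 2 + p.2 ^ 2 := by
  simp [latticeNormSq]

lemma realCast_latticeNormSq (p : ℤ × ℤ) :
    (latticeNormSq p : ℝ) = (p.1 : ℝ) ^ 2 + (p.2 : ℝ) ^ 2 := by
  exact_mod_cast intCast_latticeNormSq p

noncomputable def latticeDisk (N : ℕ) : Finset (ℤ × ℤ) :=
  (Icc (-(N : ℤ)) N ×ˢ Icc (-(N : ℤ)) N).filter (fun p => latticeNormSq p ≤ N)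

lemma mem_latticeDisk {N : ℕ} {p : ℤ × ℤ} : p ∈ latticeDisk N ↔ latticeNormSq p ≤ N := by
  refine ⟨fun h => (mem_filter.1 h).2, fun h => mem_filter.2 ⟨?_, h⟩⟩
  have h₁ := Nat.le_self_pow two_ne_zero p.1.natAbs
  have h₂ := Nat.le_self_pow two_ne_zero p.2.natAbs
  simp only [latticeNormSq] at h
  simp only [mem_product, mem_Icc]
  omega

lemma r₂_eq_card_filter_latticeDisk {N n : ℕ} (hn : n ≤ N) :
    r₂ n = #{p ∈ latticeDisk N | latticeNormSq p = n} := by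
  rw [r₂, ← Set.ncard_coe_finset]
  congr 1
  ext p
  simp only [Set.mem_ofPred_eq, coe_filter, mem_latticeDisk, ← intCast_latticeNormSq]
  constructor
  · intro h
    have h' : latticeNormSq p = n := by exact_mod_cast h
    exact ⟨h' ▸ hn, h'⟩
  · intro h
    exact_mod_cast h.2

lemma sum_latticeDisk_eq (N : ℕ) (g : ℕ → ℝ) :
    ∑ p ∈ latticeDisk N, g (latticeNormSq p) = ∑ n ∈ range (N + 1), r₂ n * g n := by
  rw [← sum_fiberwise_of_maps_to (t := range (N + 1))
    (fun p hp => mem_range.2 (Nat.lt_succ_of_le (mem_latticeDisk.1 hp)))]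
  refine sum_congr rfl fun n hn => ?_
  rw [sum_congr rfl fun p hp => by rw [(mem_filter.1 hp).2], sum_const, nsmul_eq_mul,
    r₂_eq_card_filter_latticeDisk (Nat.le_of_lt_succ (mem_range.1 hn))]

lemma znorm_le_iff {R : ℝ} (hR : 0 ≤ R) {p : ℤ × ℤ} :
    znorm p ≤ R ↔ p ∈ latticeDisk ⌊R ^ 2⌋₊ := by
  rw [znorm, Real.sqrt_le_left hR, mem_latticeDisk, Nat.le_floor_iff (by positivity),
    realCast_latticeNormSq]

lemma tsum_znorm_le_eq_sum_r₂ {R : ℝ} (hR : 0 ≤ R) (f : ℝ → ℝ) :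
    ∑' p : {p : ℤ × ℤ // znorm p ≤ R}, f ((p.1.1 : ℝ) ^ 2 + (p.1.2 : ℝ) ^ 2)
      = ∑ n ∈ range (⌊R ^ 2⌋₊ + 1), r₂ n * f n := by
  let F : ℤ × ℤ → ℝ := fun p => f ((p.1 : ℝ) ^ 2 + (p.2 : ℝ) ^ 2)
  calc ∑' p : {p : ℤ × ℤ // znorm p ≤ R}, F p.1
      = ∑' p : latticeDisk ⌊R ^ 2⌋₊, F p.1 :=
        (Equiv.subtypeEquivRight fun _ => znorm_le_iff hR).tsum_eq (fun p => F p.1)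
    _ = ∑ p ∈ latticeDisk ⌊R ^ 2⌋₊, f (latticeNormSq p) := by
        rw [Finset.tsum_subtype]
        simp only [F, realCast_latticeNormSq]
    _ = _ := sum_latticeDisk_eq _ (fun n => f n)

lemma r₂_zero : r₂ 0 = 1 := by
  have : {p : ℤ × ℤ | p.1 ^ 2 + p.2 ^ 2 = ((0 : ℕ) : ℤ)} = {(0, 0)} := by
    ext ⟨x, y⟩
    simp only [Set.mem_ofPred_eq, Nat.cast_zero, Set.mem_singleton_iff, Prod.mk.injEq]
    constructor
    · intro h
      constructor <;> nlinarith [sq_nonneg x, sq_nonneg y]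
    · rintro ⟨rfl, rfl⟩
      norm_num
  rw [r₂, this, Set.ncard_singleton]

lemma r₂_le_of_le_four_mul {ε C b : ℝ} (hε : 0 ≤ ε) (hC : 0 ≤ C)
    (hr₂ : ∀ n : ℕ, 1 ≤ n → (r₂ n : ℝ) ≤ C * (n : ℝ) ^ ε) (hb : 1 / 2 ≤ b)
    {n : ℕ} (hn : (n : ℝ) ≤ 4 * b) : (r₂ n : ℝ) ≤ (2 ^ ε + C * 4 ^ ε) * b ^ ε := by
  have hb₀ : 0 ≤ b := by linarith
  rcases Nat.eq_zero_or_pos n with rfl | hn₁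
  · have : (1 : ℝ) ≤ 2 ^ ε * b ^ ε := by
      rw [← Real.mul_rpow (by norm_num) hb₀]
      exact Real.one_le_rpow (by linarith) hε
    rw [r₂_zero, Nat.cast_one]
    refine this.trans ?_
    gcongr
    exact le_add_of_nonneg_right (by positivity)
  · calc (r₂ n : ℝ) ≤ C * (4 * b) ^ ε :=
          (hr₂ n hn₁).trans (by gcongr)
      _ = C * 4 ^ ε * b ^ ε := by rw [Real.mul_rpow (by norm_num) hb₀, mul_assoc]
      _ ≤ (2 ^ ε + C * 4 ^ ε) * b ^ ε := by
          rw [add_mul]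
          exact le_add_of_nonneg_left (by positivity)

lemma r₂_mul_one_div_le {a K : ℝ} (n : ℕ)
    (hsep : ∀ p : ℤ × ℤ, 1 / 2 ≤ |(p.1 : ℝ) ^ 2 + (p.2 : ℝ) ^ 2 - a|) (hK : (r₂ n : ℝ) ≤ K) :
    r₂ n * (1 / |(n : ℝ) - a|) ≤ K * (1 / max (1 / 2) |(n : ℝ) - a|) := by
  have hK₀ : 0 ≤ K := (Nat.cast_nonneg _).trans hK
  rcases eq_or_ne (r₂ n) 0 with h | h
  · rw [h, Nat.cast_zero, zero_mul]
    positivity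
  obtain ⟨p, hp⟩ := Set.nonempty_of_ncard_ne_zero h
  have hn : (n : ℝ) = (p.1 : ℝ) ^ 2 + (p.2 : ℝ) ^ 2 := by exact_mod_cast hp.symm
  have hdist : 1 / 2 ≤ |(n : ℝ) - a| := hn ▸ hsep p
  rw [max_eq_right hdist]
  gcongr

lemma one_div_max_half_le {k : ℕ} {d : ℝ} (hk : (k : ℝ) ≤ d) :
    1 / max (1 / 2) d ≤ 2 / (k + 1) := by
  have : ((k : ℝ) + 1) / 2 ≤ max (1 / 2) d := by
    rcases k with _ | k
    · simp
    · push_cast at hk ⊢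
      exact le_max_of_le_right (by linarith [(Nat.cast_nonneg k : (0 : ℝ) ≤ k)])
  calc 1 / max (1 / 2) d ≤ 1 / (((k : ℝ) + 1) / 2) := one_div_le_one_div_of_le (by positivity) this
    _ = 2 / (k + 1) := by field_simp

lemma sum_range_two_div_succ_le {m N : ℕ} (h : m ≤ N + 1) :
    ∑ j ∈ range m, 2 / ((j : ℝ) + 1) ≤ 2 * (1 + Real.log (N + 1)) := by
  have hH : ∑ j ∈ range (N + 1), 1 / ((j : ℝ) + 1) ≤ 1 + Real.log (N + 1) := by
    have := harmonic_le_one_add_log (N + 1)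
    push_cast [harmonic] at this
    simpa only [one_div] using this
  calc ∑ j ∈ range m, 2 / ((j : ℝ) + 1) ≤ ∑ j ∈ range (N + 1), 2 / ((j : ℝ) + 1) :=
        sum_le_sum_of_subset_of_nonneg (range_subset_range.2 h) fun _ _ _ => by positivity
    _ = 2 * ∑ j ∈ range (N + 1), 1 / ((j : ℝ) + 1) := by
        rw [mul_sum]; simp only [mul_one_div]
    _ ≤ 2 * (1 + Real.log (N + 1)) := by gcongr

lemma sum_range_one_div_max_half_le {a : ℝ} (ha : 0 ≤ a) {N : ℕ} (hN : ⌊a⌋₊ ≤ N) :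
    ∑ n ∈ range (N + 1), 1 / max (1 / 2) |(n : ℝ) - a| ≤ 4 * (1 + Real.log (N + 1)) := by
  set M := ⌊a⌋₊
  have hMa : (M : ℝ) ≤ a := Nat.floor_le ha
  have haM : a < M + 1 := Nat.lt_floor_add_one a
  have below : ∑ n ∈ range (M + 1), 1 / max (1 / 2) |(n : ℝ) - a|
      ≤ ∑ j ∈ range (M + 1), 2 / ((j : ℝ) + 1) := by
    rw [← sum_range_reflect (fun j => 2 / ((j : ℝ) + 1))]
    refine sum_le_sum fun n hn => one_div_max_half_le ?_
    have hnM : n ≤ M := Nat.le_of_lt_succ (mem_range.1 hn)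
    rw [Nat.add_sub_cancel, Nat.cast_sub hnM, abs_sub_comm]
    exact le_abs.2 (Or.inl (by linarith))
  have above : ∑ n ∈ Ico (M + 1) (N + 1), 1 / max (1 / 2) |(n : ℝ) - a|
      ≤ ∑ j ∈ range (N - M), 2 / ((j : ℝ) + 1) := by
    rw [sum_Ico_eq_sum_range, Nat.add_sub_add_right]
    refine sum_le_sum fun j _ => one_div_max_half_le ?_
    push_cast
    exact le_abs.2 (Or.inl (by linarith))
  rw [← sum_range_add_sum_Ico _ (Nat.succ_le_succ hN)]
  linarith [below.trans (sum_range_two_div_succ_le (Nat.succ_le_succ hN)),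
    above.trans (sum_range_two_div_succ_le (m := N - M) (N := N) (by omega))]

lemma one_add_log_floor_sq_le {k : ℝ} (hk : 0 ≤ k) :
    1 + Real.log (⌊(2 * k) ^ 2⌋₊ + 1) ≤ 6 * Real.log (2 + k) := by
  have hfloor : (⌊(2 * k) ^ 2⌋₊ : ℝ) ≤ (2 * k) ^ 2 := Nat.floor_le (by positivity)
  have hlog : Real.log (⌊(2 * k) ^ 2⌋₊ + 1) ≤ 4 * Real.log (2 + k) := by
    calc Real.log (⌊(2 * k) ^ 2⌋₊ + 1) ≤ Real.log ((2 + k) ^ 4) :=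
          Real.log_le_log (by positivity) (by nlinarith [sq_nonneg k, mul_nonneg hk (sq_nonneg k)])
      _ = 4 * Real.log (2 + k) := by rw [Real.log_pow]; norm_num
  have hone : 1 ≤ 2 * Real.log (2 + k) := by
    have := Real.log_le_log (by norm_num) (by linarith : (2 : ℝ) ≤ 2 + k)
    linarith [Real.log_two_gt_d9]
  linarith

theorem stmt8
    (hr2 : ∀ ε : ℝ, 0 < ε → ∃ C : ℝ, 0 < C ∧ ∀ n : ℕ, 1 ≤ n →
      (Set.ncard {p : ℤ × ℤ | p.1^2 + p.2^2 = (n : ℤ)} : ℝ) ≤ C * (n : ℝ) ^ ε) :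
    ∀ ε : ℝ, 0 < ε → ∃ C : ℝ, 0 < C ∧ ∀ kF : ℝ, 0 < kF →
      (∀ p : ℤ × ℤ, (1:ℝ)/2 ≤ |((p.1:ℝ)^2 + (p.2:ℝ)^2) - kF^2|) →
      (∑' p : {p : ℤ × ℤ // znorm p ≤ 2 * kF},
          1 / |((p.1.1:ℝ)^2 + (p.1.2:ℝ)^2) - kF^2|)
        ≤ C * kF ^ (2*ε) * Real.log (2 + kF) := by
  intro ε hε
  obtain ⟨C, hC, hr₂⟩ := hr2 ε hε
  refine ⟨24 * (2 ^ ε + C * 4 ^ ε), by positivity, fun kF hkF hsep => ?_⟩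
  have hkF2 : 1 / 2 ≤ kF ^ 2 := by simpa using hsep 0
  set N := ⌊(2 * kF) ^ 2⌋₊
  set K := (2 ^ ε + C * 4 ^ ε) * (kF ^ 2) ^ ε
  have hrK : ∀ n ∈ range (N + 1), (r₂ n : ℝ) ≤ K := fun n hn =>
    r₂_le_of_le_four_mul hε.le hC.le hr₂ hkF2 <| by
      have : (n : ℝ) ≤ N := by exact_mod_cast Nat.le_of_lt_succ (mem_range.1 hn)
      linarith [Nat.floor_le (by positivity : (0 : ℝ) ≤ (2 * kF) ^ 2)]
  have hMN : ⌊kF ^ 2⌋₊ ≤ N := Nat.floor_mono (by nlinarith)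
  calc _ = ∑ n ∈ range (N + 1), r₂ n * (1 / |(n : ℝ) - kF ^ 2|) :=
        tsum_znorm_le_eq_sum_r₂ (by positivity) (fun x => 1 / |x - kF ^ 2|)
    _ ≤ ∑ n ∈ range (N + 1), K * (1 / max (1 / 2) |(n : ℝ) - kF ^ 2|) :=
        sum_le_sum fun n hn => r₂_mul_one_div_le n hsep (hrK n hn)
    _ ≤ K * (4 * (1 + Real.log (N + 1))) := by
        rw [← mul_sum]
        gcongr
        exact sum_range_one_div_max_half_le (by positivity) hMN
    _ ≤ K * (4 * (6 * Real.log (2 + kF))) := by gcongr; exact one_add_log_floor_sq_le hkF.le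
    _ = _ := by
        rw [Real.rpow_mul hkF.le, Real.rpow_two]
        ring
end
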